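/- For every closed set S ⊆ ∂𝔻 and every f ∈ SAP(S), the total spectrum ⋃_{s ∈ S, k ∈ {−1,1}} spec_s^k(f) is at most countable. -/

import Mathlib

/-!
An almost periodic function has a mean value, attained uniformly in the position of the averaging
window, so its Bohr coefficients exist, and Bessel's inequality leaves only countably many of them
nonzero. Near each point `s`, a semi-almost periodic `f` is uniformly approximated in the
coordinate `t ↦ s e^{ik e^t}` by almost periodic functions, hence `spec_s^k(f)` lies in the
countable union of their spectra. The same approximation, by continuous functions, bounds the
oscillation of `f` on a punctured neighbourhood of every point, so `f` is continuous off a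
countable set. At a point of continuity `f(s e^{ik e^t})` tends to `f(s)` as `t → -∞`, and the
means of `f(s) e^{-iλt}` vanish for `λ ≠ 0`, so there the spectrum is contained in `{0}`.
-/

open Complex Filter Topology Set Metric
open scoped ENNReal
open scoped BoundedContinuousFunction

noncomputable section

namespace SAP

variable {B : Type*} [NormedAddCommGroup B] [NormedSpace ℂ B]

def translateR (f : ℝ →ᵇ B) (τ : ℝ) : ℝ →ᵇ B :=
  f.compContinuous ⟨fun x => x + τ, by continuity⟩

def IsAP (f : ℝ →ᵇ B) : Prop := IsCompact (closure (Set.range (translateR f)))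

def meanValueR (g : ℝ → B) : B :=
  haveI : Nonempty B := ⟨0⟩
  limUnder atTop (fun T : ℝ => (2 * T)⁻¹ • ∫ x in (-T)..T, g x)

def bohrCoeffR (g : ℝ → B) (lam : ℝ) : B :=
  meanValueR (fun x => Complex.exp (-(Complex.I * lam * x)) • g x)

def apSpec (g : ℝ → B) : Set ℝ := {lam | bohrCoeffR g lam ≠ 0}

def IsUnitalSemigroup (Γ : Set ℝ) : Prop :=
  (0 : ℝ) ∈ Γ ∧ ∀ a ∈ Γ, ∀ b ∈ Γ, a + b ∈ Γ

def circleSet : Set ℂ := {z | ‖z‖ = 1}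

def arcPt (s : circleSet) (k t : ℝ) : circleSet :=
  ⟨(s : ℂ) * Complex.exp (Complex.I * (k * t)), by
    have hs : ‖(s : ℂ)‖ = 1 := s.2
    show ‖_‖ = 1
    rw [norm_mul, hs, one_mul, Complex.norm_exp]
    simp [Complex.mul_re]⟩

def IsSAP (f : circleSet → B) : Prop :=
  ∀ s : circleSet, ∀ ε : ℝ, 0 < ε → ∃ δ : ℝ, δ ∈ Set.Ioo (0 : ℝ) Real.pi ∧
    ∃ g₁ g₂ : ℝ →ᵇ B, IsAP g₁ ∧ IsAP g₂ ∧
      (∀ x : ℝ, x < 0 → ‖f (arcPt s (-1) (δ * Real.exp x)) - g₁ x‖ < ε) ∧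
      (∀ x : ℝ, x < 0 → ‖f (arcPt s 1 (δ * Real.exp x)) - g₂ x‖ < ε)

/-- the Bohr-Fourier coefficient `a_λ^k(f,s)` of a semi-almost periodic function over a
point `s` of the circle (here `M_s^k` is computed along the sequences `aₙ = -2n`, `bₙ = -n`) -/
def circBohr (f : circleSet → B) (s : circleSet) (k lam : ℝ) : B :=
  haveI : Nonempty B := ⟨0⟩
  limUnder atTop (fun T : ℝ => T⁻¹ •
    ∫ t in (-2 * T)..(-T), Complex.exp (-(Complex.I * lam * t)) • f (arcPt s k (Real.exp t)))

/-- the spectrum `spec_s^k(f)` -/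
def sapSpec (f : circleSet → B) (s : circleSet) (k : ℝ) : Set ℝ :=
  {lam | circBohr f s k lam ≠ 0}

abbrev LinfT : Type := ↥(lp (fun _ : circleSet => ℂ) ∞)

end SAP

open scoped ComplexConjugate

lemma countable_of_forall_eventually_nhdsNE_notMem {X : Type*} [TopologicalSpace X]
    [SecondCountableTopology X] {S : Set X} (h : ∀ x ∈ S, ∀ᶠ y in 𝓝[≠] x, y ∉ S) :
    S.Countable :=
  (HereditarilyLindelofSpace.isLindelof S).countable_of_isDiscrete
    (isDiscrete_iff_nhdsNE.2 fun x hx => inf_principal_eq_bot.2 (h x hx))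

lemma countable_setOf_not_continuousAt_of_oscillation {X E : Type*} [TopologicalSpace X]
    [SecondCountableTopology X] [PseudoEMetricSpace E] {f : X → E}
    (h : ∀ c : ℝ, 0 < c → ∀ x, ∀ᶠ y in 𝓝[≠] x, oscillation f y ≤ ENNReal.ofReal c) :
    {x | ¬ContinuousAt f x}.Countable := by
  have hsub : {x | ¬ContinuousAt f x} ⊆
      ⋃ n : ℕ, {x | ENNReal.ofReal (1 / (n + 1)) < oscillation f x} := fun x hx => by
    rw [mem_ofPred_eq, ← Oscillation.eq_zero_iff_continuousAt, ← ne_eq, ← pos_iff_ne_zero,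
      ENNReal.lt_iff_exists_real_btwn] at hx
    obtain ⟨r, -, hr0, hr⟩ := hx
    obtain ⟨n, hn⟩ := exists_nat_one_div_lt (ENNReal.ofReal_pos.1 hr0)
    exact mem_iUnion.2 ⟨n, (ENNReal.ofReal_le_ofReal hn.le).trans_lt hr⟩
  refine (countable_iUnion fun n =>
    countable_of_forall_eventually_nhdsNE_notMem fun x _ => ?_).mono hsub
  exact (h _ Nat.one_div_pos_of_nat x).mono fun y hy => not_lt.2 hy

lemma oscillation_le_of_forall_norm_sub_le {X E : Type*} [TopologicalSpace X]
    [SeminormedAddCommGroup E] {f G : X → E} {x : X} {A : Set X} {ε : ℝ} (hA : A ∈ 𝓝 x)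
    (hG : ContinuousAt G x) (hfG : ∀ y ∈ A, ‖f y - G y‖ ≤ ε) (hε : 0 < ε) :
    oscillation f x ≤ ENNReal.ofReal (3 * ε) := by
  set V := A ∩ G ⁻¹' ball (G x) (ε / 2)
  have hV : V ∈ 𝓝 x := inter_mem hA (hG.preimage_mem_nhds (ball_mem_nhds _ (half_pos hε)))
  refine (biInf_le _ (image_mem_map hV)).trans (ediam_le ?_)
  rintro _ ⟨u, ⟨huA, hu⟩, rfl⟩ _ ⟨w, ⟨hwA, hw⟩, rfl⟩
  rw [edist_dist]
  refine ENNReal.ofReal_le_ofReal ?_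
  rw [mem_preimage, mem_ball] at hu hw
  have h1 : dist (f u) (G u) ≤ ε := (dist_eq_norm _ _).trans_le (hfG u huA)
  have h2 : dist (G w) (f w) ≤ ε :=
    (dist_comm _ _).trans_le ((dist_eq_norm _ _).trans_le (hfG w hwA))
  linarith [dist_triangle4 (f u) (G u) (G w) (f w), dist_triangle (G u) (G x) (G w),
    dist_comm (G x) (G w)]

namespace SAP

variable {B : Type*} [NormedAddCommGroup B]

lemma translateR_apply (f : ℝ →ᵇ B) (τ x : ℝ) : translateR f τ x = f (x + τ) := rfl

lemma IsAP.translate {f : ℝ →ᵇ B} (hf : IsAP f) (τ : ℝ) : IsAP (translateR f τ) := by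
  have hsub : range (translateR (translateR f τ)) ⊆ range (translateR f) := by
    rintro - ⟨σ, rfl⟩
    exact ⟨σ + τ, by ext x; simp [translateR_apply, add_assoc]⟩
  exact hf.of_isClosed_subset isClosed_closure (closure_mono hsub)

lemma IsAP.exists_almost_period {h : ℝ →ᵇ B} (hap : IsAP h) {ε : ℝ} (hε : 0 < ε) :
    ∃ L > 0, ∀ a : ℝ, ∃ τ ∈ Icc a (a + L), ∀ x, ‖h (x + τ) - h x‖ ≤ ε := by
  have htb : TotallyBounded (range (translateR h)) :=
    hap.totallyBounded.subset subset_closure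
  obtain ⟨t, hts, htf, hcov⟩ := (totallyBounded_iff_subset.1 htb) _ (dist_mem_uniformity hε)
  choose σ hσ using fun y : t => hts y.2
  have := htf.to_subtype
  obtain ⟨R, hR⟩ := (finite_range fun y : t => |σ y|).bddAbove
  refine ⟨2 * max R 0 + 1, by positivity, fun a => ?_⟩
  -- `τ = c - σ`, where `c` is the midpoint of the window and `translateR h σ` is a point of a
  -- finite `ε`-net within `ε` of `translateR h c`
  set c := a + (2 * max R 0 + 1) / 2 with hc
  obtain ⟨y, hyt, hdy⟩ := mem_iUnion₂.1 (hcov (mem_range_self c))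
  have hσy : |σ ⟨y, hyt⟩| ≤ max R 0 := (hR ⟨⟨y, hyt⟩, rfl⟩).trans (le_max_left _ _)
  refine ⟨c - σ ⟨y, hyt⟩,
    ⟨by linarith [(abs_le.mp hσy).2], by linarith [(abs_le.mp hσy).1]⟩, fun x => ?_⟩
  have hd : dist (translateR h c) (translateR h (σ ⟨y, hyt⟩)) < ε := by
    rw [hσ ⟨y, hyt⟩]; exact hdy
  have := (BoundedContinuousFunction.dist_coe_le_dist (x - σ ⟨y, hyt⟩)).trans hd.le
  rwa [translateR_apply, translateR_apply, dist_eq_norm, sub_add_cancel,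
    show x - σ ⟨y, hyt⟩ + c = x + (c - σ ⟨y, hyt⟩) by ring] at this

def expChar (lam : ℝ) : ℝ →ᵇ ℂ :=
  .ofNormedAddCommGroup (fun t => cexp (I * lam * t)) (by fun_prop) 1 fun t => by
    rw [mul_assoc, ← ofReal_mul, norm_exp_I_mul_ofReal]

lemma expChar_apply (lam t : ℝ) : expChar lam t = cexp (I * lam * t) := rfl

lemma norm_cexp_I_mul (lam t : ℝ) : ‖cexp (I * lam * t)‖ = 1 := by
  rw [mul_assoc, ← ofReal_mul, norm_exp_I_mul_ofReal]

lemma norm_cexp_neg_I_mul (lam t : ℝ) : ‖cexp (-(I * lam * t))‖ = 1 := by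
  rw [← mul_neg, ← ofReal_neg, norm_cexp_I_mul]

lemma IsAP.expChar_mul {h : ℝ →ᵇ ℂ} (hap : IsAP h) (lam : ℝ) : IsAP (expChar lam * h) := by
  -- each translate of `expChar lam * h` is a unimodular multiple of `expChar lam` times a
  -- translate of `h`
  let m : ℂ × (ℝ →ᵇ ℂ) → (ℝ →ᵇ ℂ) := fun p => p.1 • (expChar lam * p.2)
  have hC : IsCompact (m '' (sphere 0 1 ×ˢ closure (range (translateR h)))) :=
    ((isCompact_sphere 0 1).prod hap).image (by fun_prop)
  have hsub : range (translateR (expChar lam * h)) ⊆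
      m '' (sphere 0 1 ×ˢ closure (range (translateR h))) := by
    rintro - ⟨τ, rfl⟩
    refine ⟨(expChar lam τ, translateR h τ),
      ⟨by simp [expChar_apply, norm_cexp_I_mul], subset_closure (mem_range_self τ)⟩, ?_⟩
    ext x
    simp only [m, translateR_apply, BoundedContinuousFunction.coe_mul, Pi.mul_apply,
      BoundedContinuousFunction.coe_smul, smul_eq_mul, expChar_apply,
      ← mul_assoc, ← Complex.exp_add]
    push_cast
    ring_nf
  exact hC.of_isClosed_subset isClosed_closure (closure_minimal hsub hC.isClosed)

def avgOn (u : ℝ → ℂ) (a T : ℝ) : ℂ := T⁻¹ • ∫ t in a..a + T, u t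

section avgOn

variable (h : ℝ →ᵇ ℂ) {T : ℝ}

lemma norm_intervalIntegral_le (a b : ℝ) : ‖∫ t in a..b, h t‖ ≤ ‖h‖ * |b - a| :=
  intervalIntegral.norm_integral_le_of_norm_le_const fun x _ => h.norm_coe_le_norm x

lemma norm_avgOn_sub_avgOn_le (hT : 0 < T) (a b : ℝ) :
    ‖avgOn h a T - avgOn h b T‖ ≤ 2 * ‖h‖ * |b - a| / T := by
  have hi : ∀ u v : ℝ, IntervalIntegrable h MeasureTheory.volume u v :=
    h.continuous.intervalIntegrable
  have hsplit : avgOn h a T - avgOn h b T =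
      T⁻¹ • ((∫ t in a..b, h t) - ∫ t in a + T..b + T, h t) := by
    rw [avgOn, avgOn, ← smul_sub,
      intervalIntegral.integral_interval_sub_interval_comm (hi _ _) (hi _ _) (hi _ _)]
  rw [hsplit, norm_smul, Real.norm_of_nonneg (inv_nonneg.2 hT.le), inv_mul_le_iff₀ hT]
  calc ‖(∫ t in a..b, h t) - ∫ t in a + T..b + T, h t‖
      ≤ ‖h‖ * |b - a| + ‖h‖ * |b + T - (a + T)| :=
        (norm_sub_le _ _).trans (add_le_add (norm_intervalIntegral_le h _ _)
          (norm_intervalIntegral_le h _ _))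
    _ = T * (2 * ‖h‖ * |b - a| / T) := by
        rw [add_sub_add_right_eq_sub]; field_simp; ring

lemma norm_avgOn_add_sub_avgOn_le {τ ε : ℝ} (hτ : ∀ x, ‖h (x + τ) - h x‖ ≤ ε) (hT : 0 < T)
    (a : ℝ) : ‖avgOn h (a + τ) T - avgOn h a T‖ ≤ ε := by
  have hshift : ∫ t in a + τ..a + τ + T, h t = ∫ t in a..a + T, h (t + τ) := by
    rw [intervalIntegral.integral_comp_add_right, add_right_comm]
  rw [avgOn, avgOn, hshift, ← smul_sub, ← intervalIntegral.integral_sub (f := fun t => h (t + τ))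
    ((h.continuous.comp (continuous_add_const τ)).intervalIntegrable _ _)
    (h.continuous.intervalIntegrable _ _), norm_smul,
    Real.norm_of_nonneg (inv_nonneg.2 hT.le), inv_mul_le_iff₀ hT]
  simpa [abs_of_pos hT, mul_comm] using
    intervalIntegral.norm_integral_le_of_norm_le_const (a := a) (b := a + T) fun x _ => hτ x

lemma norm_avgOn_sub_avgOn_le_of_le {M N : ℝ} (hM : 0 < M) (hMN : M ≤ N) (a : ℝ) :
    ‖avgOn h a N - avgOn h a M‖ ≤ 2 * ‖h‖ * (N - M) / N := by
  have hN : 0 < N := hM.trans_le hMN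
  have hi : ∀ u v : ℝ, IntervalIntegrable h MeasureTheory.volume u v :=
    h.continuous.intervalIntegrable
  have hsplit : avgOn h a N - avgOn h a M =
      N⁻¹ • (∫ t in a + M..a + N, h t) + (N⁻¹ - M⁻¹) • ∫ t in a..a + M, h t := by
    rw [avgOn, avgOn, ← intervalIntegral.integral_add_adjacent_intervals (hi a (a + M)) (hi _ _)]
    module
  have h1 : ‖N⁻¹ • ∫ t in a + M..a + N, h t‖ ≤ N⁻¹ * (‖h‖ * (N - M)) := by
    rw [norm_smul, Real.norm_of_nonneg (by positivity)]
    gcongr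
    simpa [abs_of_nonneg (sub_nonneg.2 hMN)] using norm_intervalIntegral_le h (a + M) (a + N)
  have h2 : ‖(N⁻¹ - M⁻¹) • ∫ t in a..a + M, h t‖ ≤ (M⁻¹ - N⁻¹) * (‖h‖ * M) := by
    rw [norm_smul, Real.norm_eq_abs, abs_sub_comm,
      abs_of_nonneg (sub_nonneg.2 (inv_anti₀ hM hMN))]
    gcongr
    · exact sub_nonneg.2 (inv_anti₀ hM hMN)
    · simpa [abs_of_pos hM] using norm_intervalIntegral_le h a (a + M)
  calc _ ≤ N⁻¹ * (‖h‖ * (N - M)) + (M⁻¹ - N⁻¹) * (‖h‖ * M) :=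
        hsplit ▸ (norm_add_le _ _).trans (add_le_add h1 h2)
    _ = 2 * ‖h‖ * (N - M) / N := by field_simp; ring

lemma norm_avgOn_nat_mul_sub_le {c : ℂ} {η : ℝ}
    (hc : ∀ b, ‖avgOn h b T - c‖ ≤ η) {n : ℕ} (hn : n ≠ 0) (a : ℝ) :
    ‖avgOn h a (n * T) - c‖ ≤ η := by
  have hn' : (0 : ℝ) < n := by positivity
  have hblocks : avgOn h a (n * T) = (n : ℝ)⁻¹ • ∑ k ∈ Finset.range n, avgOn h (a + k * T) T := by
    have := intervalIntegral.sum_integral_adjacent_intervals (f := h) (μ := MeasureTheory.volume)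
      (a := fun k : ℕ => a + k * T) (n := n) fun k _ => h.continuous.intervalIntegrable _ _
    simp only [Nat.cast_add, Nat.cast_one, Nat.cast_zero, zero_mul, add_zero] at this
    simp only [avgOn, ← Finset.smul_sum, smul_smul, ← mul_inv, add_assoc, ← add_one_mul, this]
  have hsub : avgOn h a (n * T) - c =
      (n : ℝ)⁻¹ • ∑ k ∈ Finset.range n, (avgOn h (a + k * T) T - c) := by
    rw [hblocks, Finset.sum_sub_distrib, smul_sub, Finset.sum_const, Finset.card_range,
      ← Nat.cast_smul_eq_nsmul ℝ, smul_smul, inv_mul_cancel₀ hn'.ne', one_smul]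
  rw [hsub, norm_smul, Real.norm_of_nonneg (by positivity), inv_mul_le_iff₀ hn']
  calc _ ≤ ∑ k ∈ Finset.range n, ‖avgOn h (a + k * T) T - c‖ := norm_sum_le _ _
    _ ≤ ∑ k ∈ Finset.range n, η := Finset.sum_le_sum fun k _ => hc _
    _ = n * η := by simp

end avgOn

lemma eventually_div_atTop_le (C : ℝ) {ε : ℝ} (hε : 0 < ε) : ∀ᶠ T : ℝ in atTop, C / T ≤ ε :=
  (tendsto_const_nhds.div_atTop tendsto_id).eventually (ge_mem_nhds hε)

lemma exists_nat_mul_mem_Icc {T N : ℝ} (hT : 0 < T) (hTN : T ≤ N) :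
    ∃ n : ℕ, n ≠ 0 ∧ n * T ∈ Icc (N - T) N := by
  refine ⟨⌊N / T⌋₊, Nat.one_le_iff_ne_zero.1 ((Nat.one_le_floor_iff _).2 ((one_le_div hT).2 hTN)),
    ?_, ?_⟩
  · have := (div_lt_iff₀ hT).1 (Nat.lt_floor_add_one (N / T))
    linarith
  · exact (le_div_iff₀ hT).1 (Nat.floor_le (div_nonneg (hT.le.trans hTN) hT.le))

namespace IsAP

variable {h : ℝ →ᵇ ℂ} (hap : IsAP h)
include hap

lemma exists_avgOn_near {ε : ℝ} (hε : 0 < ε) :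
    ∃ c, ∀ᶠ N in atTop, ∀ a, ‖avgOn h a N - c‖ ≤ ε := by
  obtain ⟨L, -, hper⟩ := hap.exists_almost_period (by positivity : 0 < ε / 4)
  obtain ⟨T, hLT, hT⟩ :=
    ((eventually_div_atTop_le (2 * ‖h‖ * L) (by positivity : 0 < ε / 4)).and
      (eventually_gt_atTop 0)).exists
  -- an almost period `τ` near `b` moves the window at `b` to the window at `0`
  have hwin : ∀ b, ‖avgOn h b T - avgOn h 0 T‖ ≤ ε / 2 := fun b => by
    obtain ⟨τ, ⟨hbτ, hτb⟩, hτ⟩ := hper b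
    have h1 := norm_avgOn_sub_avgOn_le h hT b (0 + τ)
    have h2 := norm_avgOn_add_sub_avgOn_le h hτ hT 0
    have h3 : 2 * ‖h‖ * |0 + τ - b| / T ≤ 2 * ‖h‖ * L / T := by
      gcongr; rw [zero_add, abs_of_nonneg (by linarith)]; linarith
    calc ‖avgOn h b T - avgOn h 0 T‖
        ≤ ‖avgOn h b T - avgOn h (0 + τ) T‖ + ‖avgOn h (0 + τ) T - avgOn h 0 T‖ :=
          norm_sub_le_norm_sub_add_norm_sub _ _ _
      _ ≤ ε / 2 := by linarith
  refine ⟨avgOn h 0 T, ?_⟩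
  filter_upwards [eventually_ge_atTop T, eventually_div_atTop_le (2 * ‖h‖ * T)
    (by positivity : 0 < ε / 2)] with N hTN hN a
  obtain ⟨n, hn, hNn, hnN⟩ := exists_nat_mul_mem_Icc hT hTN
  have h1 := norm_avgOn_sub_avgOn_le_of_le h (by positivity) hnN a
  have h2 : 2 * ‖h‖ * (N - n * T) / N ≤ 2 * ‖h‖ * T / N := by gcongr <;> linarith
  calc ‖avgOn h a N - avgOn h 0 T‖
      ≤ ‖avgOn h a N - avgOn h a (n * T)‖ + ‖avgOn h a (n * T) - avgOn h 0 T‖ :=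
        norm_sub_le_norm_sub_add_norm_sub _ _ _
    _ ≤ ε := by linarith [norm_avgOn_nat_mul_sub_le h hwin hn a]

lemma exists_mean : ∃ m, ∀ ε > 0, ∀ᶠ N in atTop, ∀ a, ‖avgOn h a N - m‖ ≤ ε := by
  have hcauchy : CauchySeq (avgOn h 0) := Metric.cauchySeq_iff'.2 fun ε hε => by
    obtain ⟨c, hc⟩ := hap.exists_avgOn_near (by positivity : 0 < ε / 3)
    obtain ⟨N₀, hN₀⟩ := eventually_atTop.1 hc
    refine ⟨N₀, fun N hN => ?_⟩
    rw [dist_eq_norm]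
    linarith [norm_sub_le_norm_sub_add_norm_sub (avgOn h 0 N) c (avgOn h 0 N₀),
      hN₀ N hN 0, norm_sub_rev c (avgOn h 0 N₀) ▸ hN₀ N₀ le_rfl 0]
  obtain ⟨m, hm⟩ := cauchySeq_tendsto_of_complete hcauchy
  refine ⟨m, fun ε hε => ?_⟩
  obtain ⟨c, hc⟩ := hap.exists_avgOn_near (half_pos hε)
  have hmc : ‖m - c‖ ≤ ε / 2 :=
    le_of_tendsto (hm.sub_const c).norm (hc.mono fun N hN => hN 0)
  filter_upwards [hc] with N hN a
  linarith [norm_sub_le_norm_sub_add_norm_sub (avgOn h a N) c m, norm_sub_rev c m ▸ hmc, hN a]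

end IsAP

def tailMean (u : ℝ → ℂ) (T : ℝ) : ℂ := T⁻¹ • ∫ t in (-2 * T)..(-T), u t

lemma tailMean_eq_avgOn (u : ℝ → ℂ) (T : ℝ) : tailMean u T = avgOn u (-2 * T) T := by
  rw [tailMean, avgOn]; ring_nf

lemma IsAP.exists_tendsto_tailMean {h : ℝ →ᵇ ℂ} (hap : IsAP h) :
    ∃ m, Tendsto (tailMean h) atTop (𝓝 m) := by
  obtain ⟨m, hm⟩ := hap.exists_mean
  refine ⟨m, Metric.tendsto_nhds.2 fun ε hε => ?_⟩
  filter_upwards [hm (ε / 2) (half_pos hε)] with T hT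
  rw [dist_eq_norm, tailMean_eq_avgOn]
  exact (hT _).trans_lt (half_lt_self hε)

lemma IsAP.exists_tendsto_tailMean_cexp_mul {h : ℝ →ᵇ ℂ} (hap : IsAP h) (lam : ℝ) :
    ∃ c, Tendsto (tailMean fun t => cexp (-(I * lam * t)) * h t) atTop (𝓝 c) := by
  have : (fun t : ℝ => cexp (-(I * lam * t)) * h t) = ⇑(expChar (-lam) * h) := by
    ext t; simp [expChar_apply]
  exact this ▸ (hap.expChar_mul _).exists_tendsto_tailMean

lemma tailMean_const_mul (c : ℂ) (u : ℝ → ℂ) (T : ℝ) :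
    tailMean (fun t => c * u t) T = c * tailMean u T := by
  rw [tailMean, tailMean, intervalIntegral.integral_const_mul, mul_smul_comm]

lemma tailMean_sub {u v : ℝ → ℂ} (hu : Continuous u) (hv : Continuous v) (T : ℝ) :
    tailMean (fun t => u t - v t) T = tailMean u T - tailMean v T := by
  rw [tailMean, tailMean, tailMean, intervalIntegral.integral_sub (hu.intervalIntegrable _ _)
    (hv.intervalIntegrable _ _), smul_sub]

lemma tailMean_sum {ι : Type*} (s : Finset ι) {u : ι → ℝ → ℂ}
    (hu : ∀ i ∈ s, Continuous (u i)) (T : ℝ) :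
    tailMean (fun t => ∑ i ∈ s, u i t) T = ∑ i ∈ s, tailMean (u i) T := by
  rw [tailMean, intervalIntegral.integral_finsetSum fun i hi => (hu i hi).intervalIntegrable _ _,
    Finset.smul_sum]
  rfl

lemma re_tailMean_le {u : ℝ → ℂ} {C T : ℝ} (hu : Continuous u) (hC : ∀ t, (u t).re ≤ C)
    (hT : 0 < T) : (tailMean u T).re ≤ C := by
  have hre : (tailMean u T).re = T⁻¹ * ∫ t in (-2 * T)..(-T), (u t).re := by
    rw [tailMean, Complex.smul_re, smul_eq_mul]
    exact congrArg _ (reCLM.intervalIntegral_comp_comm (hu.intervalIntegrable _ _)).symm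
  rw [hre, inv_mul_le_iff₀ hT]
  calc ∫ t in (-2 * T)..(-T), (u t).re ≤ ∫ t in (-2 * T)..(-T), C :=
        intervalIntegral.integral_mono_on (by linarith)
          ((continuous_re.comp hu).intervalIntegrable _ _)
          (continuous_const.intervalIntegrable _ _)
          fun t _ => hC t
    _ = T * C := by rw [intervalIntegral.integral_const, smul_eq_mul]; ring

lemma tendsto_tailMean_cexp (θ : ℝ) :
    Tendsto (tailMean fun t => cexp (I * θ * t)) atTop (𝓝 (if θ = 0 then 1 else 0)) := by
  by_cases hθ : θ = 0
  · refine tendsto_const_nhds.congr' ?_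
    filter_upwards [eventually_gt_atTop 0] with T hT
    simp only [hθ, if_true, ofReal_zero, mul_zero, zero_mul, Complex.exp_zero, tailMean,
      intervalIntegral.integral_const]
    rw [show -T - -2 * T = T by ring, smul_smul, inv_mul_cancel₀ hT.ne', one_smul]
  · have hc : I * θ ≠ 0 := mul_ne_zero I_ne_zero (ofReal_ne_zero.2 hθ)
    have hbound : ∀ᶠ T in atTop, ‖tailMean (fun t => cexp (I * θ * t)) T‖ ≤ 2 / |θ| * T⁻¹ := by
      filter_upwards [eventually_gt_atTop 0] with T hT
      rw [tailMean, integral_exp_mul_complex hc, norm_smul, norm_div, norm_mul, norm_I,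
        norm_real, one_mul, Real.norm_of_nonneg (inv_nonneg.2 hT.le), Real.norm_eq_abs]
      have : ‖cexp (I * θ * ↑(-T)) - cexp (I * θ * ↑(-2 * T))‖ ≤ 2 := by
        refine (norm_sub_le _ _).trans ?_
        rw [norm_cexp_I_mul, norm_cexp_I_mul]; norm_num
      calc T⁻¹ * (_ / |θ|) ≤ T⁻¹ * (2 / |θ|) := by gcongr
        _ = _ := mul_comm _ _
    simpa [hθ] using squeeze_zero_norm' hbound
      (by simpa using tendsto_inv_atTop_zero.const_mul (2 / |θ|))

def trigPoly (s : Finset ℝ) (c : ℝ → ℂ) (t : ℝ) : ℂ := ∑ lam ∈ s, c lam * cexp (I * lam * t)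

lemma continuous_cexp_I_mul (lam : ℝ) : Continuous fun t : ℝ => cexp (I * lam * t) := by
  fun_prop

lemma continuous_trigPoly (s : Finset ℝ) (c : ℝ → ℂ) : Continuous (trigPoly s c) :=
  continuous_finsetSum _ fun lam _ => continuous_const.mul (continuous_cexp_I_mul lam)

lemma conj_cexp_I_mul (lam t : ℝ) : conj (cexp (I * lam * t)) = cexp (-(I * lam * t)) := by
  rw [← exp_conj, map_mul, map_mul, conj_I, conj_ofReal, conj_ofReal]; ring_nf

lemma re_two_mul_mul_conj_sub_le (z w : ℂ) : (2 * (z * conj w) - w * conj w).re ≤ ‖z‖ ^ 2 := by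
  rw [← Complex.normSq_eq_norm_sq, normSq_apply]
  simp only [sub_re, mul_re, conj_re, conj_im, re_ofNat, im_ofNat, mul_im]
  nlinarith [sq_nonneg (z.re - w.re), sq_nonneg (z.im - w.im)]

lemma tendsto_tailMean_trigPoly_mul_conj (s : Finset ℝ) (c : ℝ → ℂ) :
    Tendsto (tailMean fun t => trigPoly s c t * conj (trigPoly s c t)) atTop
      (𝓝 (∑ lam ∈ s, ((‖c lam‖ ^ 2 : ℝ) : ℂ))) := by
  have hpt : (fun t => trigPoly s c t * conj (trigPoly s c t)) = fun t : ℝ =>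
      ∑ lam ∈ s, ∑ mu ∈ s, (c lam * conj (c mu)) * cexp (I * ↑(lam - mu) * t) := by
    ext t
    simp only [trigPoly, map_sum, map_mul, conj_cexp_I_mul, Finset.sum_mul_sum]
    refine Finset.sum_congr rfl fun lam _ => Finset.sum_congr rfl fun mu _ => ?_
    rw [mul_mul_mul_comm, ← Complex.exp_add]
    push_cast
    ring_nf
  have hcont : ∀ lam mu : ℝ,
      Continuous fun t : ℝ => (c lam * conj (c mu)) * cexp (I * ↑(lam - mu) * t) :=
    fun lam mu => continuous_const.mul (continuous_cexp_I_mul _)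
  have hmean : ∀ T, (tailMean fun t : ℝ =>
      ∑ lam ∈ s, ∑ mu ∈ s, (c lam * conj (c mu)) * cexp (I * ↑(lam - mu) * t)) T =
      ∑ lam ∈ s, ∑ mu ∈ s, (c lam * conj (c mu)) *
        tailMean (fun t => cexp (I * ↑(lam - mu) * t)) T := fun T => by
    rw [tailMean_sum s fun lam _ => continuous_finsetSum s fun mu _ => hcont lam mu]
    refine Finset.sum_congr rfl fun lam _ => ?_
    rw [tailMean_sum s fun mu _ => hcont lam mu]
    exact Finset.sum_congr rfl fun mu _ => tailMean_const_mul _ _ _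
  rw [hpt]
  refine Tendsto.congr (fun T => (hmean T).symm) ?_
  have hdiag : ∀ lam ∈ s, ∑ mu ∈ s, c lam * conj (c mu) * (if lam - mu = 0 then 1 else 0) =
      ((‖c lam‖ ^ 2 : ℝ) : ℂ) := fun lam hlam => by
    simp [sub_eq_zero, hlam, mul_conj']
  rw [← Finset.sum_congr rfl hdiag]
  exact tendsto_finsetSum s fun lam _ => tendsto_finsetSum s fun mu _ =>
    (tendsto_tailMean_cexp _).const_mul _

section Bessel

variable {h : ℝ →ᵇ ℂ} {c : ℝ → ℂ} {s : Finset ℝ}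
  (hc : ∀ lam ∈ s, Tendsto (tailMean fun t => cexp (-(I * lam * t)) * h t) atTop (𝓝 (c lam)))
include hc

lemma tendsto_tailMean_mul_conj_trigPoly :
    Tendsto (tailMean fun t => h t * conj (trigPoly s c t)) atTop
      (𝓝 (∑ lam ∈ s, ((‖c lam‖ ^ 2 : ℝ) : ℂ))) := by
  have hpt : (fun t => h t * conj (trigPoly s c t)) =
      fun t : ℝ => ∑ lam ∈ s, conj (c lam) * (cexp (-(I * lam * t)) * h t) := by
    ext t
    simp only [trigPoly, map_sum, map_mul, conj_cexp_I_mul, Finset.mul_sum]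
    exact Finset.sum_congr rfl fun _ _ => by ring
  have hmean : ∀ T, (tailMean fun t : ℝ =>
      ∑ lam ∈ s, conj (c lam) * (cexp (-(I * lam * t)) * h t)) T =
      ∑ lam ∈ s, conj (c lam) * tailMean (fun t => cexp (-(I * lam * t)) * h t) T := fun T => by
    rw [tailMean_sum s fun lam _ => by fun_prop]
    exact Finset.sum_congr rfl fun lam _ => tailMean_const_mul _ _ _
  rw [hpt]
  refine Tendsto.congr (fun T => (hmean T).symm) ?_
  simp only [ofReal_pow, ← conj_mul']
  exact tendsto_finsetSum s fun lam hlam => (hc lam hlam).const_mul _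

lemma sum_norm_sq_le_of_tendsto_tailMean : ∑ lam ∈ s, ‖c lam‖ ^ 2 ≤ ‖h‖ ^ 2 := by
  set p := trigPoly s c
  have hp : Continuous p := continuous_trigPoly s c
  have hlim : Tendsto (fun T => (2 * tailMean (fun t => h t * conj (p t)) T -
      tailMean (fun t => p t * conj (p t)) T).re) atTop (𝓝 (∑ lam ∈ s, ‖c lam‖ ^ 2)) := by
    have hval : (2 * ∑ lam ∈ s, ((‖c lam‖ ^ 2 : ℝ) : ℂ) -
        ∑ lam ∈ s, ((‖c lam‖ ^ 2 : ℝ) : ℂ)).re = ∑ lam ∈ s, ‖c lam‖ ^ 2 := by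
      rw [← ofReal_sum, ← ofReal_ofNat, ← ofReal_mul, ← ofReal_sub, ofReal_re]
      ring
    rw [← hval]
    exact (continuous_re.tendsto _).comp (((tendsto_tailMean_mul_conj_trigPoly hc).const_mul 2).sub
      (tendsto_tailMean_trigPoly_mul_conj s c))
  refine le_of_tendsto hlim ?_
  filter_upwards [eventually_gt_atTop 0] with T hT
  rw [← tailMean_const_mul, ← tailMean_sub (by fun_prop) (by fun_prop)]
  -- `Re (2 h p̄ - |p|²) = |h|² - |h - p|² ≤ ‖h‖²`
  exact re_tailMean_le (by fun_prop) (fun t => (re_two_mul_mul_conj_sub_le _ _).trans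
    (pow_le_pow_left₀ (norm_nonneg _) (h.norm_coe_le_norm t) 2)) hT

end Bessel

lemma IsAP.countable_setOf_not_tendsto_tailMean {h : ℝ →ᵇ ℂ} (hap : IsAP h) :
    {lam : ℝ | ¬Tendsto (tailMean fun t => cexp (-(I * lam * t)) * h t) atTop (𝓝 0)}.Countable := by
  choose c hc using hap.exists_tendsto_tailMean_cexp_mul
  have hsum : Summable fun lam => ‖c lam‖ ^ 2 :=
    summable_of_sum_le (fun _ => by positivity) fun s =>
      sum_norm_sq_le_of_tendsto_tailMean fun lam _ => hc lam
  refine hsum.countable_support.mono fun lam hlam => ?_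
  rw [Function.mem_support, pow_ne_zero_iff two_ne_zero, norm_ne_zero_iff]
  exact fun h0 => hlam (h0 ▸ hc lam)

lemma norm_tailMean_le_add {u v : ℝ → ℂ} {T ε : ℝ} (hv : Continuous v) (hT : 0 < T)
    (huv : ∀ t ≤ -T, ‖u t - v t‖ ≤ ε) : ‖tailMean u T‖ ≤ ε + ‖tailMean v T‖ := by
  by_cases hu : IntervalIntegrable u MeasureTheory.volume (-2 * T) (-T)
  · have hdiff : ‖tailMean (fun t => u t - v t) T‖ ≤ ε := by
      rw [tailMean, norm_smul, Real.norm_of_nonneg (inv_nonneg.2 hT.le), inv_mul_le_iff₀ hT]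
      have := intervalIntegral.norm_integral_le_of_norm_le_const (a := -2 * T) (b := -T)
        fun t ht => huv t (by rw [uIoc_of_le (by linarith)] at ht; exact ht.2)
      rw [show -T - -2 * T = T by ring, abs_of_pos hT] at this
      exact this.trans_eq (mul_comm _ _)
    have hsplit : tailMean u T = tailMean (fun t => u t - v t) T + tailMean v T := by
      rw [tailMean, tailMean, tailMean, intervalIntegral.integral_sub hu
        (hv.intervalIntegrable _ _), smul_sub, sub_add_cancel]
    rw [hsplit]
    exact (norm_add_le _ _).trans (add_le_add_left hdiff _)
  · rw [tailMean, intervalIntegral.integral_undef hu, smul_zero, norm_zero]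
    exact add_nonneg ((norm_nonneg _).trans (huv (-T) le_rfl)) (norm_nonneg _)

lemma tendsto_tailMean_cexp_mul_of_approx {φ : ℝ → ℂ} {lam : ℝ}
    (happrox : ∀ ε > 0, ∃ w : ℝ → ℂ, Continuous w ∧ (∀ᶠ t in atBot, ‖φ t - w t‖ ≤ ε) ∧
      Tendsto (tailMean fun t => cexp (-(I * lam * t)) * w t) atTop (𝓝 0)) :
    Tendsto (tailMean fun t => cexp (-(I * lam * t)) * φ t) atTop (𝓝 0) := by
  refine NormedAddGroup.tendsto_nhds_zero.2 fun ε hε => ?_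
  obtain ⟨w, hw, hφw, hwlim⟩ := happrox (ε / 2) (half_pos hε)
  obtain ⟨t₀, ht₀⟩ := eventually_atBot.1 hφw
  filter_upwards [eventually_gt_atTop (max 0 (-t₀)),
    NormedAddGroup.tendsto_nhds_zero.1 hwlim (ε / 2) (half_pos hε)] with T hT hwT
  have hclose : ∀ t ≤ -T, ‖cexp (-(I * lam * t)) * φ t - cexp (-(I * lam * t)) * w t‖ ≤ ε / 2 :=
    fun t ht => by
      rw [← mul_sub, norm_mul, norm_cexp_neg_I_mul, one_mul]
      exact ht₀ t (by linarith [le_max_right 0 (-t₀)])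
  linarith [norm_tailMean_le_add (by fun_prop) ((le_max_left _ _).trans_lt hT) hclose]

lemma coe_arcPt (s : circleSet) (k t : ℝ) : (arcPt s k t : ℂ) = s * cexp (I * (k * t)) := rfl

lemma continuous_arcPt (s : circleSet) (k : ℝ) : Continuous (arcPt s k) :=
  Continuous.subtype_mk (by fun_prop) _

lemma arcPt_zero (s : circleSet) (k : ℝ) : arcPt s k 0 = s :=
  Subtype.ext (by simp [coe_arcPt])

lemma circleSet_coe_ne_zero (s : circleSet) : (s : ℂ) ≠ 0 :=
  norm_ne_zero_iff.1 (s.2.trans_ne one_ne_zero)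

lemma arcPt_mul_arg (s z : circleSet) {k : ℝ} (hk : k = -1 ∨ k = 1) :
    arcPt s k (k * arg (z / s)) = z := by
  have hz : ‖(z : ℂ) / s‖ = 1 := by rw [norm_div, z.2, s.2, div_one]
  have hkk : (k : ℂ) * k = 1 := by rcases hk with rfl | rfl <;> norm_num
  apply Subtype.ext
  rw [coe_arcPt, ofReal_mul, ← mul_assoc (k : ℂ), hkk, one_mul, mul_comm I,
    ← one_mul (cexp _), ← ofReal_one, ← hz, norm_mul_exp_arg_mul_I,
    mul_div_cancel₀ _ (circleSet_coe_ne_zero s)]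

lemma continuousAt_arg_div (s : circleSet) {z : circleSet} (hz : |arg ((z : ℂ) / s)| < Real.pi) :
    ContinuousAt (fun w : circleSet => arg ((w : ℂ) / s)) z :=
  ContinuousAt.comp (f := fun w : circleSet => (w : ℂ) / s)
    (continuousAt_arg (mem_slitPlane_iff_arg.2 ⟨(abs_lt.1 hz).2.ne,
      div_ne_zero (circleSet_coe_ne_zero z) (circleSet_coe_ne_zero s)⟩))
    (by fun_prop : Continuous fun w : circleSet => (w : ℂ) / s).continuousAt

lemma oscillation_le_of_side {f : circleSet → B} {s z : circleSet} {k δ ε : ℝ}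
    (hk : k = -1 ∨ k = 1) (hδ : δ < Real.pi) {g : ℝ →ᵇ B}
    (hfg : ∀ x < 0, ‖f (arcPt s k (δ * Real.exp x)) - g x‖ < ε) (hε : 0 < ε)
    (hz : k * arg ((z : ℂ) / s) ∈ Ioo 0 δ) : oscillation f z ≤ ENNReal.ofReal (3 * ε) := by
  set θ : circleSet → ℝ := fun w => k * arg ((w : ℂ) / s)
  have habs : ∀ w, |θ w| = |arg ((w : ℂ) / s)| := fun w => by
    rcases hk with rfl | rfl <;> simp [θ]
  have hθ : ContinuousAt θ z := continuousAt_const.mul (continuousAt_arg_div s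
    (habs z ▸ abs_lt.2 ⟨by linarith [hz.1, Real.pi_pos], hz.2.trans hδ⟩))
  have hδ0 : 0 < δ := hz.1.trans hz.2
  refine oscillation_le_of_forall_norm_sub_le (G := fun w => g (Real.log (θ w / δ)))
    (hθ.preimage_mem_nhds (Ioo_mem_nhds hz.1 hz.2))
    (g.continuous.continuousAt.comp ((hθ.div_const δ).log (div_pos hz.1 hδ0).ne'))
    (fun w hw => ?_) hε
  have hratio : 0 < θ w / δ := div_pos hw.1 hδ0
  have := hfg _ (Real.log_neg hratio ((div_lt_one hδ0).2 hw.2))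
  rw [Real.exp_log hratio, mul_div_cancel₀ _ hδ0.ne', arcPt_mul_arg s w hk] at this
  exact this.le

lemma IsSAP.eventually_oscillation_le {f : circleSet → B} (hf : IsSAP f) (s : circleSet)
    {c : ℝ} (hc : 0 < c) : ∀ᶠ z in 𝓝[≠] s, oscillation f z ≤ ENNReal.ofReal c := by
  obtain ⟨δ, hδ, g₁, g₂, -, -, h₁, h₂⟩ := hf s (c / 3) (by positivity)
  have hs : arg ((s : ℂ) / s) = 0 := by rw [div_self (circleSet_coe_ne_zero s), arg_one]
  have hN : {z : circleSet | arg ((z : ℂ) / s) ∈ Ioo (-δ) δ} ∈ 𝓝 s :=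
    (continuousAt_arg_div s (by rw [hs, abs_zero]; exact Real.pi_pos)).preimage_mem_nhds
      (Ioo_mem_nhds (by linarith [hδ.1]) (by linarith [hδ.1]))
  filter_upwards [nhdsWithin_le_nhds hN, self_mem_nhdsWithin] with z hz hzs
  rw [show c = 3 * (c / 3) by ring]
  rcases lt_trichotomy (arg ((z : ℂ) / s)) 0 with hneg | hzero | hpos
  · exact oscillation_le_of_side (Or.inl rfl) hδ.2 h₁ (by positivity)
      ⟨by linarith, by linarith [hz.1]⟩
  · exact absurd (by simpa [hzero, arcPt_zero] using (arcPt_mul_arg s z (Or.inr rfl)).symm) hzs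
  · exact oscillation_le_of_side (Or.inr rfl) hδ.2 h₂ (by positivity)
      ⟨by linarith, by linarith [hz.2]⟩

lemma IsSAP.countable_setOf_not_continuousAt {f : circleSet → B} (hf : IsSAP f) :
    {z | ¬ContinuousAt f z}.Countable :=
  countable_setOf_not_continuousAt_of_oscillation fun _ hc s => hf.eventually_oscillation_le s hc

lemma circBohr_eq_zero_of_tendsto {f : circleSet → ℂ} {s : circleSet} {k lam : ℝ}
    (h : Tendsto (tailMean fun t => cexp (-(I * lam * t)) * f (arcPt s k (Real.exp t))) atTop
      (𝓝 0)) : circBohr f s k lam = 0 :=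
  h.limUnder_eq

lemma IsSAP.exists_isAP_eventually_near {f : circleSet → B} (hf : IsSAP f) (s : circleSet)
    {k : ℝ} (hk : k = -1 ∨ k = 1) {ε : ℝ} (hε : 0 < ε) :
    ∃ g : ℝ →ᵇ B, IsAP g ∧ ∀ᶠ t in atBot, ‖f (arcPt s k (Real.exp t)) - g t‖ < ε := by
  obtain ⟨δ, hδ, g₁, g₂, hg₁, hg₂, h₁, h₂⟩ := hf s ε hε
  obtain ⟨g, hg, hfg⟩ : ∃ g : ℝ →ᵇ B, IsAP g ∧
      ∀ x < 0, ‖f (arcPt s k (δ * Real.exp x)) - g x‖ < ε := by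
    rcases hk with rfl | rfl
    exacts [⟨g₁, hg₁, h₁⟩, ⟨g₂, hg₂, h₂⟩]
  -- `x ↦ δ e^x` becomes `t ↦ e^t` after translating by `log δ`
  refine ⟨translateR g (-Real.log δ), hg.translate _, ?_⟩
  filter_upwards [eventually_lt_atBot (Real.log δ)] with t ht
  rw [translateR_apply, ← sub_eq_add_neg]
  have := hfg (t - Real.log δ) (sub_neg.2 ht)
  rwa [Real.exp_sub, Real.exp_log hδ.1, mul_div_cancel₀ _ hδ.1.ne'] at this

lemma IsSAP.countable_sapSpec {f : circleSet → ℂ} (hf : IsSAP f) (s : circleSet) {k : ℝ}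
    (hk : k = -1 ∨ k = 1) : (sapSpec f s k).Countable := by
  choose g hg hfg using fun n : ℕ =>
    hf.exists_isAP_eventually_near s hk (Nat.one_div_pos_of_nat (n := n))
  refine (countable_iUnion fun n => (hg n).countable_setOf_not_tendsto_tailMean).mono
    fun lam hlam => ?_
  by_contra hout
  simp only [mem_iUnion, mem_ofPred_eq, not_exists, not_not] at hout
  refine hlam (circBohr_eq_zero_of_tendsto (tendsto_tailMean_cexp_mul_of_approx fun ε hε => ?_))
  obtain ⟨n, hn⟩ := exists_nat_one_div_lt hε
  exact ⟨g n, (g n).continuous, (hfg n).mono fun t ht => (ht.trans hn).le, hout n⟩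

lemma sapSpec_subset_zero_of_continuousAt {f : circleSet → ℂ} {s : circleSet}
    (hs : ContinuousAt f s) (k : ℝ) : sapSpec f s k ⊆ {0} := by
  intro lam hlam
  by_contra hlam0
  refine hlam (circBohr_eq_zero_of_tendsto (tendsto_tailMean_cexp_mul_of_approx fun ε hε =>
    ⟨fun _ => f s, continuous_const, ?_, ?_⟩))
  · have harc : Tendsto (fun t => arcPt s k (Real.exp t)) atBot (𝓝 s) := by
      have := ((continuous_arcPt s k).tendsto 0).comp Real.tendsto_exp_atBot
      rwa [arcPt_zero] at this
    filter_upwards [(hs.tendsto.comp harc).eventually (closedBall_mem_nhds _ hε)] with t ht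
    rwa [← dist_eq_norm]
  · have hchar := (tendsto_tailMean_cexp (-lam)).mul_const (f s)
    rw [if_neg (neg_ne_zero.2 hlam0), zero_mul] at hchar
    refine hchar.congr fun T => ?_
    rw [mul_comm, ← tailMean_const_mul]
    congr 1
    ext t
    rw [ofReal_neg]
    ring_nf

end SAP

open SAP in
theorem stmt4_general (S : Set ℂ)
    (f : LinfT) (hf : IsSAP ⇑f) :
    (⋃ s : {z : circleSet // (z : ℂ) ∈ S}, ⋃ k ∈ ({-1, 1} : Set ℝ),
        sapSpec (⇑f) s.1 k).Countable := by
  have hD := hf.countable_setOf_not_continuousAt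
  refine ((countable_singleton 0).union (hD.biUnion fun z _ =>
    (toFinite {-1, 1}).countable.biUnion fun k hk => hf.countable_sapSpec z hk)).mono ?_
  refine iUnion_subset fun s => iUnion₂_subset fun k hk => ?_
  by_cases hs : ContinuousAt f s.1
  · exact (sapSpec_subset_zero_of_continuousAt hs k).trans subset_union_left
  · exact subset_union_of_subset_right
      ((subset_biUnion_of_mem (u := fun k => sapSpec f s.1 k) hk).trans
        (subset_biUnion_of_mem (u := fun z => ⋃ k ∈ ({-1, 1} : Set ℝ), sapSpec f z k) hs)) _

open SAP in
theorem stmt4 (S : Set ℂ) (hScirc : S ⊆ circleSet) (hScl : IsClosed S)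
    (f : LinfT) (hf : IsSAP ⇑f)
    (hfc : ContinuousOn (⇑f) {z : circleSet | (z : ℂ) ∉ S}) :
    (⋃ s : {z : circleSet // (z : ℂ) ∈ S}, ⋃ k ∈ ({-1, 1} : Set ℝ),
        sapSpec (⇑f) s.1 k).Countable :=
  stmt4_general S f hf
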